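/- arXiv:1609.08788 — 2 statements merged into one kernel-verified Lean document; each statement's English description precedes it below -/
import Mathlib

section
/- For all integers n ≥ m ≥ 0, the product m!_C · (n−m)!_C divides n!_C in A = F_q[T]; consequently the Carlitz binomial coefficient binom(n,m)_C is an element of A. -/
open Polynomial

/-- `D_i = ∏_{r=0}^{i-1} (T^{q^i} - T^{q^r})`, with `D_0 = 1`. -/
noncomputable def carlitzD (Fq : Type*) [Field Fq] (q i : ℕ) : Polynomial Fq :=
  ∏ r ∈ Finset.range i, (X ^ q ^ i - X ^ q ^ r)

/-- The Carlitz factorial `n!_C = ∏_i D_i^{n_i}`, where `n = Σ n_i q^i` is the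
`q`-adic expansion of `n` (the digit `n_i` is `n / q^i % q`). -/
noncomputable def carlitzFactorial (Fq : Type*) [Field Fq] (q n : ℕ) : Polynomial Fq :=
  ∏ i ∈ Finset.range (n + 1), carlitzD Fq q i ^ (n / q ^ i % q)

/-- The Carlitz binomial coefficient `binom(n,m)_C = n!_C / (m!_C (n-m)!_C)` for `m ≤ n`,
and `0` otherwise. -/
noncomputable def carlitzBinom (Fq : Type*) [Field Fq] (q n m : ℕ) : Polynomial Fq :=
  if m ≤ n then
    carlitzFactorial Fq q n / (carlitzFactorial Fq q m * carlitzFactorial Fq q (n - m))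
  else 0

/-!
Since `x ^ q = x` on `F_q`, raising to the power `q` is an additive endomorphism of `F_q[T]`,
so `T^{q^i} - T^{q^r} = [i - r]^{q^r}` with Carlitz's bracket `[k] = T^{q^k} - T`. Hence
`D_i = ∏_{1 ≤ k ≤ i} [k]^{q^{i-k}}`, and collecting the `q`-adic digits of `n` gives
`n!_C = ∏_{k ≥ 1} [k]^{⌊n / q^k⌋}`. Divisibility then follows from
`⌊m / q^k⌋ + ⌊(n - m) / q^k⌋ ≤ ⌊n / q^k⌋`.
-/

lemma Nat.sum_range_pow_mul_div_pow_mod_add (q a t : ℕ) :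
    ∑ j ∈ Finset.range t, q ^ j * (a / q ^ j % q) + q ^ t * (a / q ^ t) = a := by
  induction t with
  | zero => simp
  | succ t ih =>
    rw [Finset.sum_range_succ, add_assoc, pow_succ, mul_assoc, ← mul_add,
      ← Nat.div_div_eq_div_mul, Nat.mod_add_div, ih]

lemma Nat.sum_Icc_pow_mul_div_pow_mod {q : ℕ} (hq : 1 < q) {k n : ℕ} (hk : k ≤ n) :
    ∑ i ∈ Finset.Icc k n, q ^ (i - k) * (n / q ^ i % q) = n / q ^ k := by
  have htop : n / q ^ k / q ^ (n + 1 - k) = 0 := by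
    rw [Nat.div_div_eq_div_mul, ← pow_add, Nat.add_sub_cancel' (by omega)]
    exact Nat.div_eq_of_lt (Nat.lt_pow_self hq |>.trans (Nat.pow_lt_pow_right hq n.lt_succ_self))
  conv_rhs => rw [← Nat.sum_range_pow_mul_div_pow_mod_add q (n / q ^ k) (n + 1 - k), htop]
  rw [← Finset.Ico_add_one_right_eq_Icc, Finset.sum_Ico_eq_sum_range, mul_zero, add_zero]
  refine Finset.sum_congr rfl fun j _ => ?_
  rw [Nat.add_sub_cancel_left, Nat.div_div_eq_div_mul, ← pow_add]

noncomputable def carlitzBracket (Fq : Type*) [Field Fq] (q k : ℕ) : Fq[X] :=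
  X ^ q ^ k - X

section FiniteField

variable {Fq : Type*} [Field Fq] [Fintype Fq]

local notation "q" => Fintype.card Fq

lemma carlitzD_succ (i : ℕ) :
    carlitzD Fq q (i + 1) = carlitzBracket Fq q (i + 1) * carlitzD Fq q i ^ q := by
  have hfrob : ∀ r, (X ^ q ^ i - X ^ q ^ r : Fq[X]) ^ q = X ^ q ^ (i + 1) - X ^ q ^ (r + 1) := by
    intro r
    rw [← FiniteField.expand_card, map_sub, map_pow, map_pow, expand_X, ← pow_mul, ← pow_mul,
      ← pow_succ', ← pow_succ']
  rw [carlitzD, carlitzD, Finset.prod_range_succ', ← Finset.prod_pow, mul_comm]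
  simp only [hfrob, pow_zero, pow_one, carlitzBracket]

lemma carlitzD_eq_prod_carlitzBracket (i : ℕ) :
    carlitzD Fq q i = ∏ k ∈ Finset.Icc 1 i, carlitzBracket Fq q k ^ q ^ (i - k) := by
  induction i with
  | zero => simp [carlitzD]
  | succ i ih =>
    rw [carlitzD_succ, ih, Finset.prod_Icc_succ_top (by omega), ← Finset.prod_pow, mul_comm,
      Nat.sub_self, pow_zero, pow_one]
    congr 1
    refine Finset.prod_congr rfl fun k hk => ?_
    rw [← pow_mul, ← pow_succ, Nat.sub_add_comm (Finset.mem_Icc.mp hk).2]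

lemma carlitzFactorial_eq_prod_carlitzBracket (n : ℕ) :
    carlitzFactorial Fq q n
      = ∏ k ∈ Finset.Icc 1 n, carlitzBracket Fq q k ^ (n / q ^ k) := by
  calc carlitzFactorial Fq q n
      = ∏ i ∈ Finset.range (n + 1), ∏ k ∈ Finset.Icc 1 i,
          carlitzBracket Fq q k ^ (q ^ (i - k) * (n / q ^ i % q)) := by
        refine Finset.prod_congr rfl fun i _ => ?_
        simp only [carlitzD_eq_prod_carlitzBracket, ← Finset.prod_pow, pow_mul]
    _ = ∏ k ∈ Finset.Icc 1 n, ∏ i ∈ Finset.Icc k n,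
          carlitzBracket Fq q k ^ (q ^ (i - k) * (n / q ^ i % q)) :=
        Finset.prod_comm' fun i k => by simp only [Finset.mem_range, Finset.mem_Icc]; omega
    _ = ∏ k ∈ Finset.Icc 1 n, carlitzBracket Fq q k ^ (n / q ^ k) := by
        refine Finset.prod_congr rfl fun k hk => ?_
        rw [Finset.prod_pow_eq_pow_sum,
          Nat.sum_Icc_pow_mul_div_pow_mod Fintype.one_lt_card (Finset.mem_Icc.mp hk).2]

lemma carlitzFactorial_eq_prod_carlitzBracket_of_le {n N : ℕ} (hn : n ≤ N) :
    carlitzFactorial Fq q n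
      = ∏ k ∈ Finset.Icc 1 N, carlitzBracket Fq q k ^ (n / q ^ k) := by
  rw [carlitzFactorial_eq_prod_carlitzBracket]
  refine Finset.prod_subset (Finset.Icc_subset_Icc_right hn) fun k hkN hkn => ?_
  have hnk : n < k := by simp only [Finset.mem_Icc] at hkN hkn; omega
  rw [Nat.div_eq_of_lt (hnk.trans (Nat.lt_pow_self Fintype.one_lt_card)), pow_zero]

lemma carlitzFactorial_mul_dvd_add (a b : ℕ) :
    carlitzFactorial Fq q a * carlitzFactorial Fq q b ∣ carlitzFactorial Fq q (a + b) := by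
  rw [carlitzFactorial_eq_prod_carlitzBracket_of_le (a.le_add_right b),
    carlitzFactorial_eq_prod_carlitzBracket_of_le (b.le_add_left a),
    carlitzFactorial_eq_prod_carlitzBracket, ← Finset.prod_mul_distrib]
  refine Finset.prod_dvd_prod_of_dvd _ _ fun k _ => ?_
  rw [← pow_add]
  exact pow_dvd_pow _ Nat.div_add_div_le_add_div

end FiniteField

theorem carlitzFactorial_mul_dvd_general (Fq : Type*) [Field Fq] [Fintype Fq]
    (p s : ℕ) (hcard : Fintype.card Fq = p ^ s)
    (n m : ℕ) (hmn : m ≤ n) :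
    (carlitzFactorial Fq (p ^ s) m * carlitzFactorial Fq (p ^ s) (n - m) ∣
      carlitzFactorial Fq (p ^ s) n) ∧
    carlitzBinom Fq (p ^ s) n m *
        (carlitzFactorial Fq (p ^ s) m * carlitzFactorial Fq (p ^ s) (n - m)) =
      carlitzFactorial Fq (p ^ s) n := by
  rw [← hcard]
  have hdvd := Nat.add_sub_cancel' hmn ▸ carlitzFactorial_mul_dvd_add (Fq := Fq) m (n - m)
  refine ⟨hdvd, ?_⟩
  have hdiv := EuclideanDomain.mod_add_div (carlitzFactorial Fq (Fintype.card Fq) n)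
    (carlitzFactorial Fq (Fintype.card Fq) m * carlitzFactorial Fq (Fintype.card Fq) (n - m))
  rw [carlitzBinom, if_pos hmn]
  rwa [EuclideanDomain.mod_eq_zero.mpr hdvd, zero_add, mul_comm] at hdiv

/-- For `n ≥ m ≥ 0`, `m!_C · (n−m)!_C` divides `n!_C` in `A = F_q[T]`; consequently the
Carlitz binomial coefficient `binom(n,m)_C` is an element of `A` (it times the denominator
recovers `n!_C`). -/
theorem carlitzFactorial_mul_dvd (Fq : Type*) [Field Fq] [Fintype Fq]
    (p s : ℕ) (hp : p.Prime) (hs : 0 < s) (hcard : Fintype.card Fq = p ^ s)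
    (n m : ℕ) (hmn : m ≤ n) :
    (carlitzFactorial Fq (p ^ s) m * carlitzFactorial Fq (p ^ s) (n - m) ∣
      carlitzFactorial Fq (p ^ s) n) ∧
    carlitzBinom Fq (p ^ s) n m *
        (carlitzFactorial Fq (p ^ s) m * carlitzFactorial Fq (p ^ s) (n - m)) =
      carlitzFactorial Fq (p ^ s) n :=
  carlitzFactorial_mul_dvd_general Fq p s hcard n m hmn
end

section
/- Let ℘ be a prime of degree h ≥ 1 in A and 𝔮 a primitive root modulo ℘. Let m ∈ ℤ and ᾱ, β̄ ∈ S_h^ω. Then the map Ψ(u, v) = u + q^{h·deg(ᾱ)} v is a bijection from the union ⋃_{j=0}^{q^h−2} S_j(ᾱ) × S_{m−j}(β̄) onto S_m(ᾱ⋆β̄). -/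
open Polynomial

/-- `S_j` for the value `z = z_ᾱ(h)`: the set of integers `0 ≤ u ≤ z` with
`binom(z, u)_C ≡ 𝔮^j (mod ℘)`, where `𝔮` is (the class of) a primitive root modulo `℘`,
viewed as a unit of `A/℘A`. -/
noncomputable def carlitzResidueSet (Fq : Type*) [Field Fq] (q : ℕ) (℘ : Polynomial Fq)
    (𝔮 : (Polynomial Fq ⧸ Ideal.span {℘})ˣ) (z : ℕ) (j : ℤ) : Set ℕ :=
  {u : ℕ | u ≤ z ∧
    Ideal.Quotient.mk (Ideal.span {℘}) (carlitzBinom Fq q z u) = ↑(𝔮 ^ j)}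

/-!
With `[i] = T^{q^i} - T`, the Frobenius gives `D_{i+1} = [i+1] D_i^q`, and comparing digits
yields `binom(u + w, u)_C = ∏_{i ≥ 1} [i]^{c_i}`, where `c_i` is the carry into position `i` of
the base-`q` addition `u + w`. Modulo `℘` the bracket `[i]` only depends on `i mod h`, and
`[N] ≡ 0` for `N = h·deg ᾱ`. Since `z_{ᾱ⋆β̄} = z_ᾱ + q^N z_β̄`, this gives a Lucas theorem:
modulo `℘`, `binom(z_{ᾱ⋆β̄}, u + q^N v)_C ≡ binom(z_ᾱ, u)_C binom(z_β̄, v)_C` for `u < q^N`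
(a carry into position `N` kills the left side exactly when a factor on the right vanishes).
Writing the first factor as `𝔮^j` with `0 ≤ j < q^h - 1` gives the bijection.
-/

namespace Carlitz

/-- The carry into position `i` when `m` and `k` are added in base `q`. -/
def carry (q m k i : ℕ) : ℕ := (m % q ^ i + k % q ^ i) / q ^ i

section Carry

variable {q m k : ℕ}

lemma carry_zero (q m k : ℕ) : carry q m k 0 = 0 := by simp [carry, Nat.mod_one]

lemma carry_eq_zero_of_add_lt {i : ℕ} (h : m + k < q ^ i) : carry q m k i = 0 :=
  Nat.div_eq_of_lt (by have := Nat.mod_le m (q ^ i); have := Nat.mod_le k (q ^ i); omega)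

lemma add_div_pow_eq (hq : 0 < q) (m k i : ℕ) :
    (m + k) / q ^ i = m / q ^ i + k / q ^ i + carry q m k i := by
  have hP : 0 < q ^ i := pow_pos hq i
  have h : m + k = (m % q ^ i + k % q ^ i) + q ^ i * (m / q ^ i + k / q ^ i) := by
    have := Nat.mod_add_div m (q ^ i); have := Nat.mod_add_div k (q ^ i); rw [Nat.mul_add]; omega
  rw [h, Nat.add_mul_div_left _ _ hP, carry]
  omega

lemma carry_succ (hq : 0 < q) (m k i : ℕ) :
    carry q m k (i + 1) = (m / q ^ i % q + k / q ^ i % q + carry q m k i) / q := by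
  have hP : 0 < q ^ i := pow_pos hq i
  have h : m % q ^ (i + 1) + k % q ^ (i + 1)
      = (m % q ^ i + k % q ^ i) + q ^ i * (m / q ^ i % q + k / q ^ i % q) := by
    rw [pow_succ, Nat.mod_mul, Nat.mod_mul]; ring
  rw [carry, h, pow_succ, ← Nat.div_div_eq_div_mul, Nat.add_mul_div_left _ _ hP, carry]
  ring_nf

lemma digit_add_add_carry (hq : 0 < q) (m k i : ℕ) :
    (m + k) / q ^ i % q + q * carry q m k (i + 1)
      = m / q ^ i % q + k / q ^ i % q + carry q m k i := by
  rw [add_div_pow_eq hq, carry_succ hq]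
  set c := carry q m k i
  have h : (m / q ^ i + k / q ^ i + c) % q = (m / q ^ i % q + k / q ^ i % q + c) % q := by
    simp [Nat.add_mod]
  rw [h, Nat.mod_add_div]

lemma carry_add_pow_mul_of_le {N i : ℕ} (m' k' : ℕ) (hi : i ≤ N) :
    carry q (m + q ^ N * m') (k + q ^ N * k') i = carry q m k i := by
  obtain ⟨t, ht⟩ := pow_dvd_pow q hi
  simp only [carry, ht, mul_assoc, Nat.add_mul_mod_self_left]

lemma carry_add_pow_mul_add (hq : 0 < q) {N : ℕ} (m' k' i : ℕ) (hmk : m + k < q ^ N) :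
    carry q (m + q ^ N * m') (k + q ^ N * k') (N + i) = carry q m' k' i := by
  have hP : 0 < q ^ N := pow_pos hq N
  have hmod : ∀ {x : ℕ} (x' : ℕ), x < q ^ N →
      (x + q ^ N * x') % q ^ (N + i) = x + q ^ N * (x' % q ^ i) := by
    intro x x' hx
    rw [pow_add, Nat.mod_mul, Nat.add_mul_mod_self_left, Nat.mod_eq_of_lt hx,
      Nat.add_mul_div_left _ _ hP, Nat.div_eq_of_lt hx, zero_add]
  rw [carry, hmod m' (by omega), hmod k' (by omega), pow_add, ← Nat.div_div_eq_div_mul,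
    show m + q ^ N * (m' % q ^ i) + (k + q ^ N * (k' % q ^ i))
      = (m + k) + q ^ N * (m' % q ^ i + k' % q ^ i) by ring,
    Nat.add_mul_div_left _ _ hP, Nat.div_eq_of_lt hmk, zero_add, carry]

lemma mod_le_and_div_le_of_carry_eq_zero (hq : 0 < q) {w w' za zb N : ℕ} (hza : za < q ^ N)
    (hsum : w + w' = za + q ^ N * zb) (hc : carry q w w' N = 0) :
    w % q ^ N ≤ za ∧ w / q ^ N ≤ zb := by
  have hP : 0 < q ^ N := pow_pos hq N
  have hdiv := add_div_pow_eq hq w w' N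
  rw [hsum, hc, Nat.add_mul_div_left _ _ hP, Nat.div_eq_of_lt hza, zero_add, add_zero] at hdiv
  have hlt : w % q ^ N + w' % q ^ N < q ^ N := (Nat.div_eq_zero_iff.mp hc).resolve_left hP.ne'
  have hmod : (w + w') % q ^ N = w % q ^ N + w' % q ^ N := by
    rw [Nat.add_mod, Nat.mod_eq_of_lt hlt]
  rw [hsum, Nat.add_mul_mod_self_left, Nat.mod_eq_of_lt hza] at hmod
  exact ⟨hmod ▸ Nat.le_add_right _ _, hdiv ▸ Nat.le_add_right _ _⟩

end Carry

noncomputable def bracket (Fq : Type*) [Field Fq] (q i : ℕ) : Fq[X] := X ^ q ^ i - X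

/-- The range is long enough: there is no carry into a position `i > m + k`. -/
noncomputable def carryProd (Fq : Type*) [Field Fq] (q m k : ℕ) : Fq[X] :=
  ∏ i ∈ Finset.range (m + k), bracket Fq q (i + 1) ^ carry q m k (i + 1)

section CarryProd

variable {Fq : Type*} [Field Fq] {q : ℕ}

lemma prod_range_bracket_pow_carry_of_le (hq : 1 < q) {m k B C : ℕ} (hB : m + k < q ^ (B + 1))
    (hBC : B ≤ C) :
    ∏ i ∈ Finset.range C, bracket Fq q (i + 1) ^ carry q m k (i + 1)
      = ∏ i ∈ Finset.range B, bracket Fq q (i + 1) ^ carry q m k (i + 1) := by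
  refine (Finset.prod_subset (Finset.range_subset_range.mpr hBC) fun i _ hi => ?_).symm
  rw [carry_eq_zero_of_add_lt, pow_zero]
  exact hB.trans_le (Nat.pow_le_pow_right (by omega) (by simp at hi; omega))

lemma carryProd_eq_prod_range (hq : 1 < q) {m k B : ℕ} (hB : m + k < q ^ (B + 1)) :
    carryProd Fq q m k = ∏ i ∈ Finset.range B, bracket Fq q (i + 1) ^ carry q m k (i + 1) := by
  have hmk : m + k < q ^ (m + k + 1) :=
    (Nat.lt_pow_self hq).trans (Nat.pow_lt_pow_right hq (by omega))
  rw [carryProd, ← prod_range_bracket_pow_carry_of_le hq hmk (le_max_right B (m + k)),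
    prod_range_bracket_pow_carry_of_le hq hB (le_max_left B (m + k))]

variable {R : Type*} [CommRing R] (φ : Fq[X] →+* R)

lemma map_bracket_add_of_map_X_pow {N : ℕ} (hX : φ (X ^ q ^ N) = φ X) (i : ℕ) :
    φ (bracket Fq q (i + N)) = φ (bracket Fq q i) := by
  rw [bracket, bracket, map_sub, map_sub, pow_add, pow_mul', map_pow, hX, map_pow]

/-- Carries into positions `≤ N` come from the low blocks, those into `N + i` from the high
blocks, and `[N + i] ≡ [i]`. -/
lemma map_carryProd_add_pow_mul (hq : 1 < q) {N m k : ℕ} (hX : φ (X ^ q ^ N) = φ X)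
    (m' k' : ℕ) (hmk : m + k < q ^ N) :
    φ (carryProd Fq q (m + q ^ N * m') (k + q ^ N * k'))
      = φ (carryProd Fq q m k) * φ (carryProd Fq q m' k') := by
  have hbound : m + q ^ N * m' + (k + q ^ N * k') < q ^ (N + (m' + k') + 1) := by
    have h1 : m' + k' + 1 ≤ q ^ (m' + k' + 1) := (Nat.lt_pow_self hq).le
    calc m + q ^ N * m' + (k + q ^ N * k') < q ^ N * (m' + k' + 1) := by nlinarith
      _ ≤ q ^ N * q ^ (m' + k' + 1) := Nat.mul_le_mul_left _ h1
      _ = q ^ (N + (m' + k') + 1) := by ring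
  rw [carryProd_eq_prod_range hq hbound, Finset.prod_range_add, map_mul,
    carryProd_eq_prod_range hq (B := N) (hmk.trans (Nat.pow_lt_pow_right hq N.lt_succ_self)),
    carryProd]
  congr 1
  · refine congrArg φ (Finset.prod_congr rfl fun i hi => ?_)
    rw [carry_add_pow_mul_of_le m' k' (by simp at hi; omega)]
  · simp only [map_prod, map_pow]
    refine Finset.prod_congr rfl fun i _ => ?_
    rw [add_assoc, carry_add_pow_mul_add (by omega) m' k' (i + 1) hmk, add_comm N,
      map_bracket_add_of_map_X_pow φ hX]

lemma carry_eq_zero_of_map_carryProd_ne_zero {N m k : ℕ} (hq : 1 < q) (hX : φ (X ^ q ^ N) = φ X)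
    (hne : φ (carryProd Fq q m k) ≠ 0) : carry q m k N = 0 := by
  obtain _ | n := N
  · exact carry_zero q m k
  by_contra hc
  have hle : q ^ (n + 1) ≤ m + k := by
    by_contra! hlt; exact hc (carry_eq_zero_of_add_lt hlt)
  apply hne
  rw [carryProd, map_prod]
  refine Finset.prod_eq_zero (i := n) (Finset.mem_range.mpr ?_) ?_
  · exact (Nat.lt_pow_self hq).trans_le hle |>.trans' (by omega)
  · rw [map_pow, bracket, map_sub, hX, sub_self, zero_pow hc]

end CarryProd

section Factorial

variable {Fq : Type*} [Field Fq]

lemma carlitzD_ne_zero {q : ℕ} (hq : 1 < q) (i : ℕ) : carlitzD Fq q i ≠ 0 :=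
  Finset.prod_ne_zero_iff.mpr fun r hr => sub_ne_zero.mpr fun h =>
    (Nat.pow_lt_pow_right hq (Finset.mem_range.mp hr)).ne'
      (by simpa using congrArg natDegree h)

lemma carlitzFactorial_eq_prod_range {q : ℕ} (hq : 1 < q) {n B : ℕ} (hB : n < B) :
    carlitzFactorial Fq q n = ∏ i ∈ Finset.range B, carlitzD Fq q i ^ (n / q ^ i % q) := by
  refine Finset.prod_subset (Finset.range_subset_range.mpr hB) fun i _ hi => ?_
  have hn : n < q ^ i :=
    (Nat.lt_pow_self hq).trans_le (Nat.pow_le_pow_right (by omega) (by simp at hi; omega))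
  rw [Nat.div_eq_of_lt hn, Nat.zero_mod, pow_zero]

lemma carlitzBinom_eq_zero_of_lt {q n u : ℕ} (h : n < u) : carlitzBinom Fq q n u = 0 :=
  if_neg h.not_ge

variable [Fintype Fq]

local notation "q" => Fintype.card Fq

lemma carlitzD_succ (i : ℕ) :
    carlitzD Fq q (i + 1) = bracket Fq q (i + 1) * carlitzD Fq q i ^ q := by
  rw [carlitzD, Finset.prod_range_succ', carlitzD, ← Finset.prod_pow, mul_comm, bracket, pow_zero,
    pow_one]
  congr 1
  refine Finset.prod_congr rfl fun r _ => ?_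
  rw [← FiniteField.expand_card, map_sub, map_pow, map_pow, expand_X, ← pow_mul, ← pow_mul,
    ← pow_succ', ← pow_succ']

/-- Multiply `D_i ^ ((m + k)_i + q c_{i+1}) = D_i ^ (m_i + k_i + c_i)` over `i` and cancel
`∏ D_i ^ (q c_{i+1})`, using `D_{i+1} = [i+1] D_i ^ q`. -/
lemma carlitzFactorial_add (m k : ℕ) :
    carlitzFactorial Fq q (m + k)
      = carlitzFactorial Fq q m * carlitzFactorial Fq q k * carryProd Fq q m k := by
  have hq : 1 < q := Fintype.one_lt_card
  set P := ∏ i ∈ Finset.range (m + k + 1), carlitzD Fq q i ^ (q * carry q m k (i + 1)) with hP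
  have hcarries :
      ∏ i ∈ Finset.range (m + k + 1), carlitzD Fq q i ^ carry q m k i = carryProd Fq q m k * P := by
    rw [hP, Finset.prod_range_succ', Finset.prod_range_succ _ (m + k), carry_zero, pow_zero,
      mul_one, carry_eq_zero_of_add_lt ((Nat.lt_pow_self hq).trans (Nat.pow_lt_pow_right hq
      (by omega))), mul_zero, pow_zero, mul_one, carryProd, ← Finset.prod_mul_distrib]
    refine Finset.prod_congr rfl fun i _ => ?_
    rw [carlitzD_succ, mul_pow, ← pow_mul]
  have hdigits : carlitzFactorial Fq q (m + k) * P
      = carlitzFactorial Fq q m * carlitzFactorial Fq q k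
        * ∏ i ∈ Finset.range (m + k + 1), carlitzD Fq q i ^ carry q m k i := by
    rw [hP, carlitzFactorial_eq_prod_range hq (by omega : m < m + k + 1),
      carlitzFactorial_eq_prod_range hq (by omega : k < m + k + 1), carlitzFactorial,
      ← Finset.prod_mul_distrib, ← Finset.prod_mul_distrib, ← Finset.prod_mul_distrib]
    refine Finset.prod_congr rfl fun i _ => ?_
    rw [← pow_add, ← pow_add, ← pow_add, digit_add_add_carry (by omega)]
  rw [hcarries, ← mul_assoc] at hdigits
  exact mul_right_cancel₀
    (Finset.prod_ne_zero_iff.mpr fun i _ => pow_ne_zero _ (carlitzD_ne_zero hq i)) hdigits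

lemma carlitzBinom_eq_carryProd {n u : ℕ} (hu : u ≤ n) :
    carlitzBinom Fq q n u = carryProd Fq q u (n - u) := by
  have hq : 1 < q := Fintype.one_lt_card
  have hfact : ∀ n, carlitzFactorial Fq q n ≠ 0 := fun n =>
    Finset.prod_ne_zero_iff.mpr fun i _ => pow_ne_zero _ (carlitzD_ne_zero hq i)
  have hn : carlitzFactorial Fq q n
      = carlitzFactorial Fq q u * carlitzFactorial Fq q (n - u) * carryProd Fq q u (n - u) := by
    rw [← carlitzFactorial_add, Nat.add_sub_cancel' hu]
  rw [carlitzBinom, if_pos hu, hn]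
  exact mul_div_cancel_left₀ _ (mul_ne_zero (hfact u) (hfact (n - u)))

end Factorial

section Lucas

variable {Fq : Type*} [Field Fq] [Fintype Fq]

local notation "q" => Fintype.card Fq

/-- Lucas' theorem for Carlitz binomials, in blocks of `N` base-`q` digits. -/
theorem map_carlitzBinom_add_pow_mul {R : Type*} [CommRing R] (φ : Fq[X] →+* R) {N za u : ℕ}
    (hX : φ (X ^ q ^ N) = φ X) (hza : za < q ^ N) (hu : u < q ^ N) (zb v : ℕ) :
    φ (carlitzBinom Fq q (za + q ^ N * zb) (u + q ^ N * v))
      = φ (carlitzBinom Fq q za u) * φ (carlitzBinom Fq q zb v) := by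
  have hq : 1 < q := Fintype.one_lt_card
  by_cases hle : u ≤ za ∧ v ≤ zb
  · obtain ⟨hua, hvb⟩ := hle
    have hmul := Nat.mul_le_mul_left (q ^ N) hvb
    have hw : u + q ^ N * v ≤ za + q ^ N * zb := by omega
    have hsub : za + q ^ N * zb - (u + q ^ N * v) = (za - u) + q ^ N * (zb - v) := by
      rw [Nat.mul_sub]; omega
    rw [carlitzBinom_eq_carryProd hw, hsub, map_carryProd_add_pow_mul φ hq hX _ _ (by omega),
      carlitzBinom_eq_carryProd hua, carlitzBinom_eq_carryProd hvb]
  · have hzero : φ (carlitzBinom Fq q za u) * φ (carlitzBinom Fq q zb v) = 0 := by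
      rcases not_and_or.mp hle with h | h
      · rw [carlitzBinom_eq_zero_of_lt (not_le.mp h), map_zero, zero_mul]
      · rw [carlitzBinom_eq_zero_of_lt (not_le.mp h), map_zero, mul_zero]
    rw [hzero]
    by_cases hw : u + q ^ N * v ≤ za + q ^ N * zb
    · rw [carlitzBinom_eq_carryProd hw]
      by_contra hne
      have hc := carry_eq_zero_of_map_carryProd_ne_zero φ hq hX hne
      have hdigits := mod_le_and_div_le_of_carry_eq_zero (by omega) hza
        (Nat.add_sub_cancel' hw) hc
      rw [Nat.add_mul_mod_self_left, Nat.mod_eq_of_lt hu,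
        Nat.add_mul_div_left _ _ (by positivity), Nat.div_eq_of_lt hu, zero_add] at hdigits
      exact hle hdigits
    · rw [carlitzBinom_eq_zero_of_lt (not_le.mp hw), map_zero]

end Lucas

section ResidueSet

variable {Fq : Type*} [Field Fq] {q : ℕ} {℘ : Fq[X]} [Nontrivial (Fq[X] ⧸ Ideal.span {℘})]
  {𝔮 : (Fq[X] ⧸ Ideal.span {℘})ˣ}

lemma mem_carlitzResidueSet_iff {z u : ℕ} {j : ℤ} :
    u ∈ carlitzResidueSet Fq q ℘ 𝔮 z j
      ↔ Ideal.Quotient.mk (Ideal.span {℘}) (carlitzBinom Fq q z u) = ↑(𝔮 ^ j) := by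
  refine ⟨And.right, fun h => ⟨not_lt.mp fun hlt => ?_, h⟩⟩
  rw [carlitzBinom_eq_zero_of_lt hlt, map_zero] at h
  exact (𝔮 ^ j).ne_zero h.symm

theorem carlitzResidueSet_bijOn_of_lucas [Finite (Fq[X] ⧸ Ideal.span {℘})]
    (hgen : ∀ x, x ∈ Subgroup.zpowers 𝔮) (m : ℤ) {za zb Q : ℕ} (hza : za < Q)
    (hlucas : ∀ u < Q, ∀ v,
      Ideal.Quotient.mk (Ideal.span {℘}) (carlitzBinom Fq q (za + Q * zb) (u + Q * v))
        = Ideal.Quotient.mk (Ideal.span {℘}) (carlitzBinom Fq q za u)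
          * Ideal.Quotient.mk (Ideal.span {℘}) (carlitzBinom Fq q zb v)) :
    Set.BijOn (fun uv : ℕ × ℕ => uv.1 + Q * uv.2)
      (⋃ j ∈ Finset.range (orderOf 𝔮),
        carlitzResidueSet Fq q ℘ 𝔮 za (j : ℤ) ×ˢ carlitzResidueSet Fq q ℘ 𝔮 zb (m - (j : ℤ)))
      (carlitzResidueSet Fq q ℘ 𝔮 (za + Q * zb) m) := by
  classical
  have hQ : 0 < Q := by omega
  refine ⟨?_, ?_, ?_⟩
  · rintro ⟨u, v⟩ huv
    obtain ⟨j, -, hu, hv⟩ := Set.mem_iUnion₂.mp huv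
    rw [mem_carlitzResidueSet_iff, hlucas u (hu.1.trans_lt hza), hu.2, hv.2,
      ← Units.val_mul, ← zpow_add, add_sub_cancel]
  · rintro ⟨u, v⟩ huv ⟨u', v'⟩ huv' heq
    obtain ⟨j, -, hu, -⟩ := Set.mem_iUnion₂.mp huv
    obtain ⟨j', -, hu', -⟩ := Set.mem_iUnion₂.mp huv'
    have hmod := congrArg (· % Q) heq
    have hdiv := congrArg (· / Q) heq
    simp only [Nat.add_mul_mod_self_left, Nat.add_mul_div_left _ _ hQ,
      Nat.mod_eq_of_lt (hu.1.trans_lt hza), Nat.mod_eq_of_lt (hu'.1.trans_lt hza),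
      Nat.div_eq_of_lt (hu.1.trans_lt hza), Nat.div_eq_of_lt (hu'.1.trans_lt hza),
      zero_add] at hmod hdiv
    exact Prod.ext hmod hdiv
  · intro w hw
    rw [mem_carlitzResidueSet_iff, ← Nat.mod_add_div w Q,
      hlucas _ (Nat.mod_lt w hQ)] at hw
    obtain ⟨x, hx⟩ := isUnit_of_mul_isUnit_left (hw ▸ (𝔮 ^ m).isUnit)
    obtain ⟨j, hj, rfl⟩ := Finset.mem_image.mp (mem_zpowers_iff_mem_range_orderOf.mp (hgen x))
    have hv :
        Ideal.Quotient.mk (Ideal.span {℘}) (carlitzBinom Fq q zb (w / Q)) = ↑(𝔮 ^ (m - j)) := by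
      rw [zpow_sub, zpow_natCast, Units.val_mul, ← hw, ← hx, mul_right_comm, Units.mul_inv,
        one_mul]
    refine ⟨(w % Q, w / Q), Set.mem_iUnion₂.mpr ⟨j, hj, ?_, ?_⟩, Nat.mod_add_div w Q⟩
    · rw [mem_carlitzResidueSet_iff, ← hx, zpow_natCast]
    · rw [mem_carlitzResidueSet_iff, hv]

end ResidueSet

end Carlitz

theorem carlitzResidueSet_bijOn_general (Fq : Type*) [Field Fq] [Fintype Fq]
    (p s : ℕ) (hcard : Fintype.card Fq = p ^ s)
    (h : ℕ) (℘ : Polynomial Fq) (hirr : Irreducible ℘) (hdeg : ℘.natDegree = h)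
    (𝔮 : (Polynomial Fq ⧸ Ideal.span {℘})ˣ) (hgen : ∀ x, x ∈ Subgroup.zpowers 𝔮)
    (m : ℤ) (a b : List ℕ) (ha' : ∀ x ∈ a, x < (p ^ s) ^ h) :
    Set.BijOn (fun uv : ℕ × ℕ => uv.1 + ((p ^ s) ^ h) ^ a.length * uv.2)
      (⋃ j ∈ Finset.range ((p ^ s) ^ h - 1),
        carlitzResidueSet Fq (p ^ s) ℘ 𝔮 (Nat.ofDigits ((p ^ s) ^ h) a) (j : ℤ) ×ˢ
          carlitzResidueSet Fq (p ^ s) ℘ 𝔮 (Nat.ofDigits ((p ^ s) ^ h) b) (m - (j : ℤ)))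
      (carlitzResidueSet Fq (p ^ s) ℘ 𝔮 (Nat.ofDigits ((p ^ s) ^ h) (a ++ b)) m) := by
  rw [← hcard] at ha' ⊢
  have := PrincipalIdealRing.isMaximal_of_irreducible hirr
  let := Ideal.Quotient.field (Ideal.span {℘})
  have : Module.Finite Fq (Fq[X] ⧸ Ideal.span {℘}) := (AdjoinRoot.powerBasis hirr.ne_zero).finite
  have : Finite (Fq[X] ⧸ Ideal.span {℘}) := Module.finite_of_finite Fq
  have horder : orderOf 𝔮 = Fintype.card Fq ^ h - 1 := by
    rw [orderOf_eq_card_of_forall_mem_zpowers hgen, Nat.card_units,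
      Module.natCard_eq_pow_finrank (K := Fq), finrank_quotient_span_eq_natDegree, hdeg,
      Nat.card_eq_fintype_card]
  have hX : Ideal.Quotient.mk (Ideal.span {℘}) (X ^ Fintype.card Fq ^ (h * a.length))
      = Ideal.Quotient.mk (Ideal.span {℘}) X := by
    rw [Ideal.Quotient.eq, Ideal.mem_span_singleton, Fintype.card_eq_nat_card]
    exact hirr.natDegree_dvd_iff_dvd_X_pow_card_pow_sub_X.mp (by rw [hdeg]; exact dvd_mul_right h _)
  have hqh : 1 < Fintype.card Fq ^ h :=
    Nat.one_lt_pow (hdeg ▸ hirr.natDegree_pos).ne' Fintype.one_lt_card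
  have hza := Nat.ofDigits_lt_base_pow_length hqh ha'
  rw [Nat.ofDigits_append, ← horder]
  refine Carlitz.carlitzResidueSet_bijOn_of_lucas hgen m hza fun u hu v => ?_
  rw [← pow_mul] at hza hu ⊢
  exact Carlitz.map_carlitzBinom_add_pow_mul _ hX hza hu _ v

/-- Lemma (main lemma): for a prime `℘` of degree `h ≥ 1` in `A`, a primitive root `𝔮`
modulo `℘`, `m ∈ ℤ`, and words `ᾱ, β̄ ∈ S_h^ω` (nonempty lists of digits `< q^h`, with
`z_ᾱ(h) = Nat.ofDigits (q^h) ᾱ`, `deg ᾱ = ᾱ.length`, concatenation = list append), the map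
`Ψ(u,v) = u + q^{h·deg ᾱ} v` is a bijection from `⋃_{j=0}^{q^h−2} S_j(ᾱ) × S_{m−j}(β̄)`
onto `S_m(ᾱ⋆β̄)`. -/
theorem carlitzResidueSet_bijOn (Fq : Type*) [Field Fq] [Fintype Fq]
    (p s : ℕ) (hp : p.Prime) (hs : 0 < s) (hcard : Fintype.card Fq = p ^ s)
    (h : ℕ) (hh : 1 ≤ h) (℘ : Polynomial Fq) (hirr : Irreducible ℘) (hdeg : ℘.natDegree = h)
    (𝔮 : (Polynomial Fq ⧸ Ideal.span {℘})ˣ) (hgen : ∀ x, x ∈ Subgroup.zpowers 𝔮)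
    (m : ℤ) (a b : List ℕ) (ha : a ≠ []) (ha' : ∀ x ∈ a, x < (p ^ s) ^ h)
    (hb : b ≠ []) (hb' : ∀ x ∈ b, x < (p ^ s) ^ h) :
    Set.BijOn (fun uv : ℕ × ℕ => uv.1 + ((p ^ s) ^ h) ^ a.length * uv.2)
      (⋃ j ∈ Finset.range ((p ^ s) ^ h - 1),
        carlitzResidueSet Fq (p ^ s) ℘ 𝔮 (Nat.ofDigits ((p ^ s) ^ h) a) (j : ℤ) ×ˢ
          carlitzResidueSet Fq (p ^ s) ℘ 𝔮 (Nat.ofDigits ((p ^ s) ^ h) b) (m - (j : ℤ)))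
      (carlitzResidueSet Fq (p ^ s) ℘ 𝔮 (Nat.ofDigits ((p ^ s) ^ h) (a ++ b)) m) :=
  carlitzResidueSet_bijOn_general Fq p s hcard h ℘ hirr hdeg 𝔮 hgen m a b ha'
end
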